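/- arXiv:1904.00218 — 3 statements merged into one kernel-verified Lean document; each statement's English description precedes it below -/
import Mathlib

section
/- Let B be a real symmetric N×N matrix with smallest eigenvalue λ_min > 0, let γ > 0 be a constant, let T₀ ∈ ℝ, and let F : ℝ × ℝ^N → ℝ^N satisfy a Lipschitz condition with respect to the second variable with constant 𝓛 > 0, where 𝓛 < γ·λ_min. Let x : ℝ → ℝ^N and x₀ : ℝ → ℝ be such that ε(t) := x(t) − x₀(t)·𝟙 is C¹ on [T₀,∞) and satisfies ε′(t) = F(t, x(t)) − F(t, x₀(t)·𝟙) − γ·(B·ε(t)) for all t ≥ T₀. Then ‖ε(t)‖ ≤ ‖ε(T₀)‖·e^{−(γ·λ_min − 𝓛)·(t−T₀)} for all t ≥ T₀, and consequently ‖ε(t)‖ → 0 as t → ∞. -/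
/-!
Write `k = γ λmin - 𝓛 > 0`. Along the flow `d/dt ‖ε‖² = 2⟪ε, ε'⟫`; the Lipschitz bound
controls the coupling term by `𝓛 ‖ε‖²`, while the Rayleigh bound `⟪ε, B ε⟫ ≥ λmin ‖ε‖²` makes
the damping term contribute at most `-γ λmin ‖ε‖²`. Hence `d/dt ‖ε‖² ≤ -2k ‖ε‖²`, and
Grönwall's inequality gives `‖ε t‖² ≤ ‖ε T₀‖² e^{-2k(t - T₀)}`.
-/

open Filter Set Real

variable {E : Type*} [NormedAddCommGroup E] [InnerProductSpace ℝ E]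

theorem OrthonormalBasis.mul_norm_sq_le_inner_apply {ι : Type*} [Fintype ι]
    (b : OrthonormalBasis ι ℝ E) (T : E →ₗ[ℝ] E) {μ : ι → ℝ}
    (hT : ∀ i, T (b i) = μ i • b i) {c : ℝ} (hc : ∀ i, c ≤ μ i) (v : E) :
    c * ‖v‖ ^ 2 ≤ inner ℝ v (T v) := by
  have hTv : T v = ∑ i, (inner ℝ (b i) v * μ i) • b i := by
    conv_lhs => rw [← b.sum_repr' v]
    simp [map_sum, hT, smul_smul]
  have hquad : inner ℝ v (T v) = ∑ i, μ i * inner ℝ (b i) v ^ 2 := by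
    simp only [hTv, inner_sum, real_inner_smul_right, real_inner_comm v]
    exact Finset.sum_congr rfl fun i _ => by ring
  have hparseval : ‖v‖ ^ 2 = ∑ i, inner ℝ (b i) v ^ 2 := by
    simp only [← b.sum_sq_norm_inner_right v, Real.norm_eq_abs, sq_abs]
  rw [hquad, hparseval, Finset.mul_sum]
  exact Finset.sum_le_sum fun i _ => mul_le_mul_of_nonneg_right (hc i) (sq_nonneg _)

theorem Matrix.IsHermitian.toEuclideanCLM_eigenvectorBasis {𝕜 n : Type*} [RCLike 𝕜]
    [Fintype n] [DecidableEq n] {A : Matrix n n 𝕜} (hA : A.IsHermitian) (j : n) :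
    Matrix.toEuclideanCLM (𝕜 := 𝕜) (n := n) A (hA.eigenvectorBasis j) =
      hA.eigenvalues j • hA.eigenvectorBasis j :=
  WithLp.ofLp_injective 2 <| by
    rw [Matrix.ofLp_toEuclideanCLM, hA.mulVec_eigenvectorBasis, WithLp.ofLp_smul]

theorem Matrix.IsHermitian.mul_norm_sq_le_inner_toEuclideanCLM {n : Type*} [Fintype n]
    [DecidableEq n] {A : Matrix n n ℝ} (hA : A.IsHermitian) {c : ℝ}
    (hc : ∀ i, c ≤ hA.eigenvalues i) (v : EuclideanSpace ℝ n) :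
    c * ‖v‖ ^ 2 ≤ inner ℝ v (Matrix.toEuclideanCLM (𝕜 := ℝ) (n := n) A v) :=
  hA.eigenvectorBasis.mul_norm_sq_le_inner_apply
    (Matrix.toEuclideanCLM (𝕜 := ℝ) (n := n) A).toLinearMap
    hA.toEuclideanCLM_eigenvectorBasis hc v

theorem inner_sub_sub_smul_le {u v w : E} {L c γ : ℝ} (hu : ‖u‖ ≤ L * ‖v‖)
    (hw : c * ‖v‖ ^ 2 ≤ inner ℝ v w) (hγ : 0 ≤ γ) :
    inner ℝ v (u - γ • w) ≤ -(γ * c - L) * ‖v‖ ^ 2 := by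
  have hvu : inner ℝ v u ≤ L * ‖v‖ ^ 2 :=
    calc inner ℝ v u ≤ ‖v‖ * ‖u‖ := real_inner_le_norm v u
      _ ≤ ‖v‖ * (L * ‖v‖) := mul_le_mul_of_nonneg_left hu (norm_nonneg v)
      _ = L * ‖v‖ ^ 2 := by ring
  rw [inner_sub_right, real_inner_smul_right]
  nlinarith [mul_le_mul_of_nonneg_left hw hγ]

theorem le_mul_exp_of_hasDerivAt_le_mul {g g' : ℝ → ℝ} {K T₀ : ℝ}
    (hg : ∀ t, T₀ ≤ t → HasDerivAt g (g' t) t)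
    (hg' : ∀ t, T₀ ≤ t → g' t ≤ K * g t)
    {t : ℝ} (ht : T₀ ≤ t) :
    g t ≤ g T₀ * exp (K * (t - T₀)) := by
  have hcont : ContinuousOn g (Icc T₀ t) := fun s hs =>
    (hg s hs.1).continuousAt.continuousWithinAt
  have hslope : ∀ s ∈ Ico T₀ t, ∀ r, g' s < r →
      ∃ᶠ z in nhdsWithin s (Ioi s), (z - s)⁻¹ * (g z - g s) < r := fun s hs r hr =>
    ((hg s hs.1).hasDerivWithinAt.liminf_right_slope_le hr).mono fun z hz => by
      rwa [slope_def_field, div_eq_inv_mul] at hz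
  have hgronwall := le_gronwallBound_of_liminf_deriv_right_le (K := K) (ε := 0) hcont hslope le_rfl
    (fun s hs => by simpa using hg' s hs.1) t ⟨ht, le_rfl⟩
  rwa [gronwallBound_ε0] at hgronwall

theorem norm_le_mul_exp_of_inner_deriv_le {ε ε' : ℝ → E} {k T₀ : ℝ}
    (hε : ∀ t, T₀ ≤ t → HasDerivAt ε (ε' t) t)
    (hdiss : ∀ t, T₀ ≤ t → inner ℝ (ε t) (ε' t) ≤ -k * ‖ε t‖ ^ 2)
    {t : ℝ} (ht : T₀ ≤ t) :
    ‖ε t‖ ≤ ‖ε T₀‖ * exp (-k * (t - T₀)) := by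
  have hsq := le_mul_exp_of_hasDerivAt_le_mul (g := (‖ε ·‖ ^ 2)) (K := -2 * k)
    (fun s hs => (hε s hs).norm_sq) (fun s hs => by linarith [hdiss s hs]) ht
  have hexp : exp (-2 * k * (t - T₀)) = exp (-k * (t - T₀)) ^ 2 := by
    rw [← exp_nat_mul]; ring_nf
  rw [hexp, ← mul_pow] at hsq
  exact (pow_le_pow_iff_left₀ (norm_nonneg _) (by positivity) two_ne_zero).1 hsq

theorem tendsto_mul_exp_neg_mul_sub_atTop {k : ℝ} (hk : 0 < k) (C T₀ : ℝ) :
    Tendsto (fun t => C * exp (-k * (t - T₀))) atTop (nhds 0) := by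
  have hlin : Tendsto (fun t => -k * (t - T₀)) atTop atBot :=
    (tendsto_atTop_add_const_right atTop (-T₀) tendsto_id).const_mul_atTop_of_neg
      (neg_neg_of_pos hk)
  simpa using (tendsto_exp_atBot.comp hlin).const_mul C

theorem stmt7_general {N : ℕ} (B : Matrix (Fin N) (Fin N) ℝ)
    (hB : B.IsHermitian) (lmin : ℝ)
    (hmin_le : ∀ i, lmin ≤ hB.eigenvalues i)
    (γ : ℝ) (hγ : 0 < γ) (T₀ : ℝ)
    (F : ℝ → EuclideanSpace ℝ (Fin N) → EuclideanSpace ℝ (Fin N))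
    (L : ℝ) (hLlt : L < γ * lmin)
    (hFLip : ∀ t x y, ‖F t x - F t y‖ ≤ L * ‖x - y‖)
    (ones : EuclideanSpace ℝ (Fin N))
    (x : ℝ → EuclideanSpace ℝ (Fin N)) (x₀ : ℝ → ℝ)
    (ε : ℝ → EuclideanSpace ℝ (Fin N)) (hε : ∀ t, ε t = x t - x₀ t • ones)
    (hode : ∀ t, T₀ ≤ t →
      HasDerivAt ε
        (F t (x t) - F t (x₀ t • ones)
          - γ • (Matrix.toEuclideanCLM (𝕜 := ℝ) (n := Fin N) B (ε t))) t) :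
    (∀ t, T₀ ≤ t →
      ‖ε t‖ ≤ ‖ε T₀‖ * Real.exp (-(γ * lmin - L) * (t - T₀))) ∧
    Filter.Tendsto (fun t => ‖ε t‖) Filter.atTop (nhds 0) := by
  have hdecay : ∀ t, T₀ ≤ t → ‖ε t‖ ≤ ‖ε T₀‖ * exp (-(γ * lmin - L) * (t - T₀)) :=
    fun t ht => norm_le_mul_exp_of_inner_deriv_le hode (fun s _ =>
      inner_sub_sub_smul_le (by simpa only [← hε] using hFLip s (x s) (x₀ s • ones))
        (hB.mul_norm_sq_le_inner_toEuclideanCLM hmin_le (ε s)) hγ.le) ht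
  refine ⟨hdecay, tendsto_of_tendsto_of_tendsto_of_le_of_le' tendsto_const_nhds
    (tendsto_mul_exp_neg_mul_sub_atTop (sub_pos.2 hLlt) ‖ε T₀‖ T₀)
    (Eventually.of_forall fun t => norm_nonneg _) ?_⟩
  filter_upwards [eventually_ge_atTop T₀] with t ht using hdecay t ht

/-- With `B` real symmetric, smallest eigenvalue `λmin > 0`, constant gain
`γ > 0`, and `F` Lipschitz in the second variable with constant `𝓛 ∈ (0, γ * λmin)`:
if `ε t := x t - x₀ t • 𝟙` is differentiable on `[T₀, ∞)` with
`ε'(t) = F(t, x t) - F(t, x₀ t • 𝟙) - γ • (B ⬝ ε t)` there, then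
`‖ε t‖ ≤ ‖ε T₀‖ * e^(-(γ*λmin - 𝓛)*(t - T₀))` for all `t ≥ T₀`, and `‖ε t‖ → 0`
as `t → ∞`. -/
theorem stmt7 {N : ℕ} (hN : 0 < N) (B : Matrix (Fin N) (Fin N) ℝ)
    (hB : B.IsHermitian) (lmin : ℝ)
    (hmin_le : ∀ i, lmin ≤ hB.eigenvalues i)
    (hmin_mem : ∃ i, hB.eigenvalues i = lmin)
    (hlmin_pos : 0 < lmin)
    (γ : ℝ) (hγ : 0 < γ) (T₀ : ℝ)
    (F : ℝ → EuclideanSpace ℝ (Fin N) → EuclideanSpace ℝ (Fin N))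
    (L : ℝ) (hL : 0 < L) (hLlt : L < γ * lmin)
    (hFLip : ∀ t x y, ‖F t x - F t y‖ ≤ L * ‖x - y‖)
    (ones : EuclideanSpace ℝ (Fin N)) (hones : ∀ i, ones i = 1)
    (x : ℝ → EuclideanSpace ℝ (Fin N)) (x₀ : ℝ → ℝ)
    (ε : ℝ → EuclideanSpace ℝ (Fin N)) (hε : ∀ t, ε t = x t - x₀ t • ones)
    (hC1 : ContDiffOn ℝ 1 ε (Set.Ici T₀))
    (hode : ∀ t, T₀ ≤ t →
      HasDerivAt ε
        (F t (x t) - F t (x₀ t • ones)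
          - γ • (Matrix.toEuclideanCLM (𝕜 := ℝ) (n := Fin N) B (ε t))) t) :
    (∀ t, T₀ ≤ t →
      ‖ε t‖ ≤ ‖ε T₀‖ * Real.exp (-(γ * lmin - L) * (t - T₀))) ∧
    Filter.Tendsto (fun t => ‖ε t‖) Filter.atTop (nhds 0) :=
  stmt7_general B hB lmin hmin_le γ hγ T₀ F L hLlt hFLip ones x x₀ ε hε hode
end

section
/- Consider the hybrid setup, with λ_min > 0 and M := max(1−δ, e^{−λ_min}) ∈ (0,1). Assume M + μ*·𝓛 < 1 and that there exists a constant C such that for all n ≥ 0 and all t ∈ [a_n, b_n], ∑_{j=0}^{n−1}(𝓛·M^{−1}·(b_j−a_j) + (ln M)·∫_{a_j}^{b_j} γ(s) ds) + 𝓛·M^{−1}·(t−a_n) + (ln M)·∫_{a_n}^{t} γ(s) ds ≤ C. Then ‖ε_n(t)‖ ≤ ‖ε_0(a_0)‖·e^{C}·(M + μ*·𝓛)^n for all n ≥ 0 and t ∈ [a_n, b_n], and consequently sup_{t ∈ [a_n,b_n]} ‖ε_n(t)‖ → 0 as n → ∞. -/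
open RealInnerProductSpace Set Real

/-!
On a flow interval, differentiating `‖ε‖²` and using `⟪B v, v⟫ ≥ λ_min ‖v‖²` gives
`‖ε_n(t)‖ ≤ ‖ε_n(a_n)‖ · exp(𝓛 (t - a_n) - λ_min ∫_{a_n}^t γ)`; since `M ≤ 1` and
`-λ_min ≤ ln M`, this exponent is at most `𝓛 M⁻¹ (t - a_n) + ln M ∫_{a_n}^t γ`.
At a jump, the eigenvalues `1 - μ_j γ_j λ_i` of `I - μ_j γ_j B` lie in `(0, 1 - δ]`, so
`‖ε_{j+1}(a_{j+1})‖ ≤ (M + μ* 𝓛) ‖ε_j(b_j)‖`. Chaining both estimates, the exponents add up to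
at most `C` and only the geometric factor `(M + μ* 𝓛)^n` remains.
-/

namespace Matrix.IsHermitian

variable {n : Type*} [Fintype n] [DecidableEq n] {B : Matrix n n ℝ} (hB : B.IsHermitian)

lemma toEuclideanCLM_eigenvectorBasis_s12 (i : n) :
    toEuclideanCLM (𝕜 := ℝ) B (hB.eigenvectorBasis i) =
      hB.eigenvalues i • hB.eigenvectorBasis i := by
  ext1
  simpa using congrFun (hB.mulVec_eigenvectorBasis i) _

lemma repr_toEuclideanCLM (v : EuclideanSpace ℝ n) (i : n) :
    hB.eigenvectorBasis.repr (toEuclideanCLM (𝕜 := ℝ) B v) i =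
      hB.eigenvalues i * hB.eigenvectorBasis.repr v i := by
  simp only [OrthonormalBasis.repr_apply_apply]
  calc ⟪hB.eigenvectorBasis i, toEuclideanCLM (𝕜 := ℝ) B v⟫
      = ⟪toEuclideanCLM (𝕜 := ℝ) B (hB.eigenvectorBasis i), v⟫ :=
        ((isSymmetric_toEuclideanLin_iff.mpr hB) _ _).symm
    _ = _ := by rw [hB.toEuclideanCLM_eigenvectorBasis_s12, real_inner_smul_left]

lemma repr_toEuclideanCLM_one_sub_smul (c : ℝ) (v : EuclideanSpace ℝ n) (i : n) :
    hB.eigenvectorBasis.repr (toEuclideanCLM (𝕜 := ℝ) (1 - c • B) v) i =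
      (1 - c * hB.eigenvalues i) * hB.eigenvectorBasis.repr v i := by
  simp only [map_sub, map_one, map_smul, _root_.sub_apply, one_apply_eq_self, _root_.smul_apply,
    PiLp.sub_apply, PiLp.smul_apply, hB.repr_toEuclideanCLM, smul_eq_mul]
  ring

lemma mul_norm_sq_le_inner_toEuclideanCLM_s12 {lmin : ℝ} (hmin : ∀ i, lmin ≤ hB.eigenvalues i)
    (v : EuclideanSpace ℝ n) :
    lmin * ‖v‖ ^ 2 ≤ ⟪toEuclideanCLM (𝕜 := ℝ) B v, v⟫ := by
  rw [← hB.eigenvectorBasis.repr.inner_map_map, ← hB.eigenvectorBasis.repr.norm_map,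
    EuclideanSpace.norm_sq_eq, PiLp.inner_apply, Finset.mul_sum]
  refine Finset.sum_le_sum fun i _ => ?_
  rw [hB.repr_toEuclideanCLM, ← smul_eq_mul (hB.eigenvalues i), real_inner_smul_left,
    real_inner_self_eq_norm_sq]
  exact mul_le_mul_of_nonneg_right (hmin i) (sq_nonneg _)

lemma norm_toEuclideanCLM_one_sub_smul_le {c M : ℝ} (hM : 0 ≤ M)
    (hc : ∀ i, |1 - c * hB.eigenvalues i| ≤ M) (v : EuclideanSpace ℝ n) :
    ‖toEuclideanCLM (𝕜 := ℝ) (1 - c • B) v‖ ≤ M * ‖v‖ := by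
  rw [← hB.eigenvectorBasis.repr.norm_map, ← hB.eigenvectorBasis.repr.norm_map v]
  refine le_of_sq_le_sq ?_ (by positivity)
  rw [mul_pow, EuclideanSpace.norm_sq_eq, EuclideanSpace.norm_sq_eq, Finset.mul_sum]
  refine Finset.sum_le_sum fun i _ => ?_
  rw [hB.repr_toEuclideanCLM_one_sub_smul, Real.norm_eq_abs, Real.norm_eq_abs, abs_mul, mul_pow]
  gcongr
  exact hc i

end Matrix.IsHermitian

theorem norm_add_smul_le_of_le {E : Type*} [SeminormedAddCommGroup E] [NormedSpace ℝ E]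
    {x y v : E} {M μ μ' L : ℝ} (hx : ‖x‖ ≤ M * ‖v‖) (hμ : 0 ≤ μ) (hμμ' : μ ≤ μ')
    (hy : ‖y‖ ≤ L * ‖v‖) : ‖x + μ • y‖ ≤ (M + μ' * L) * ‖v‖ := calc
  ‖x + μ • y‖ ≤ M * ‖v‖ + μ * (L * ‖v‖) := norm_add_le_of_le hx (by
    rw [norm_smul, Real.norm_of_nonneg hμ]; exact mul_le_mul_of_nonneg_left hy hμ)
  _ ≤ (M + μ' * L) * ‖v‖ := by nlinarith [(norm_nonneg y).trans hy]

theorem mul_sub_mul_le_mul_inv_mul_add_log_mul {L M lmin τ I : ℝ} (hL : 0 ≤ L)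
    (hM : exp (-lmin) ≤ M) (hM1 : M ≤ 1) (hτ : 0 ≤ τ) (hI : 0 ≤ I) :
    L * τ - lmin * I ≤ L * M⁻¹ * τ + log M * I := by
  have hM0 : 0 < M := (exp_pos _).trans_le hM
  have hlog : -lmin ≤ log M := (le_log_iff_exp_le hM0).2 hM
  have hMinv : 1 ≤ M⁻¹ := (one_le_inv₀ hM0).2 hM1
  nlinarith [mul_le_mul_of_nonneg_right hlog hI, mul_nonneg (mul_nonneg hL (sub_nonneg.2 hMinv)) hτ]

theorem le_mul_exp_sub_of_hasDerivAt_le {u u' F k : ℝ → ℝ} {a b : ℝ}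
    (hu : ∀ t ∈ Icc a b, HasDerivAt u (u' t) t) (hF : ∀ t ∈ Icc a b, HasDerivAt F (k t) t)
    (hle : ∀ t ∈ Icc a b, u' t ≤ k t * u t) {t : ℝ} (ht : t ∈ Icc a b) :
    u t ≤ u a * exp (F t - F a) := by
  have hφ : ∀ s ∈ Icc a b, HasDerivAt (fun s => exp (-F s) * u s)
      (exp (-F s) * (u' s - k s * u s)) s := fun s hs =>
    ((hF s hs).neg.exp.mul (hu s hs)).congr_deriv (by rw [Pi.neg_apply]; ring)
  have hanti : AntitoneOn (fun s => exp (-F s) * u s) (Icc a b) :=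
    antitoneOn_of_hasDerivWithinAt_nonpos (convex_Icc a b)
      (fun s hs => (hφ s hs).continuousAt.continuousWithinAt)
      (fun s hs => (hφ s (interior_subset hs)).hasDerivWithinAt)
      (fun s hs => mul_nonpos_of_nonneg_of_nonpos (exp_pos _).le
        (sub_nonpos.2 (hle s (interior_subset hs))))
  calc u t = exp (F t) * (exp (-F t) * u t) := by rw [← mul_assoc, ← exp_add]; simp
    _ ≤ exp (F t) * (exp (-F a) * u a) :=
      mul_le_mul_of_nonneg_left (hanti (left_mem_Icc.2 (ht.1.trans ht.2)) ht ht.1) (exp_pos _).le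
    _ = u a * exp (F t - F a) := by rw [sub_eq_add_neg, exp_add]; ring

theorem norm_le_of_hasDerivAt_neg_smul_add {E : Type*} [NormedAddCommGroup E]
    [InnerProductSpace ℝ E] {T : E →L[ℝ] E} {lmin L : ℝ} (hT : ∀ v, lmin * ‖v‖ ^ 2 ≤ ⟪T v, v⟫)
    {γ : ℝ → ℝ} (hγc : Continuous γ) (hγ0 : ∀ s, 0 ≤ γ s) {a b : ℝ} {ε g : ℝ → E}
    (hode : ∀ t ∈ Icc a b, HasDerivAt ε (-(γ t) • T (ε t) + g t) t)
    (hg : ∀ t ∈ Icc a b, ‖g t‖ ≤ L * ‖ε t‖) {t : ℝ} (ht : t ∈ Icc a b) :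
    ‖ε t‖ ≤ ‖ε a‖ * exp (L * (t - a) - lmin * ∫ s in a..t, γ s) := by
  have hF : ∀ s, HasDerivAt (fun s => 2 * (L * s - lmin * ∫ r in a..s, γ r))
      (2 * (L - lmin * γ s)) s := fun s => by
    simpa using (((hasDerivAt_id s).const_mul L).sub
      ((hγc.integral_hasStrictDerivAt a s).hasDerivAt.const_mul lmin)).const_mul 2
  have hinner : ∀ s ∈ Icc a b,
      2 * ⟪ε s, -(γ s) • T (ε s) + g s⟫ ≤ 2 * (L - lmin * γ s) * ‖ε s‖ ^ 2 := fun s hs => by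
    have hTε : γ s * (lmin * ‖ε s‖ ^ 2) ≤ γ s * ⟪ε s, T (ε s)⟫ := by
      rw [real_inner_comm]; exact mul_le_mul_of_nonneg_left (hT _) (hγ0 s)
    have hgε : ⟪ε s, g s⟫ ≤ L * ‖ε s‖ ^ 2 := calc
      ⟪ε s, g s⟫ ≤ ‖ε s‖ * ‖g s‖ := real_inner_le_norm _ _
      _ ≤ ‖ε s‖ * (L * ‖ε s‖) := by gcongr; exact hg s hs
      _ = L * ‖ε s‖ ^ 2 := by ring
    rw [inner_add_right, real_inner_smul_right]
    nlinarith
  have hsq := le_mul_exp_sub_of_hasDerivAt_le (fun s hs => (hode s hs).norm_sq)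
    (fun s _ => hF s) hinner ht
  refine le_of_sq_le_sq (hsq.trans_eq ?_) (by positivity)
  rw [intervalIntegral.integral_same, mul_pow, sq (exp _), ← exp_add]
  ring_nf

theorem le_mul_exp_sum_mul_pow {s e Q : ℕ → ℝ} {r : ℝ} (hr : 0 ≤ r)
    (hflow : ∀ n, e n ≤ s n * exp (Q n)) (hjump : ∀ n, s (n + 1) ≤ r * e n) (n : ℕ) :
    s n ≤ s 0 * exp (∑ j ∈ Finset.range n, Q j) * r ^ n := by
  induction n with
  | zero => simp
  | succ n ih => calc
      s (n + 1) ≤ r * (s n * exp (Q n)) := (hjump n).trans (by gcongr; exact hflow n)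
      _ ≤ r * (s 0 * exp (∑ j ∈ Finset.range n, Q j) * r ^ n * exp (Q n)) := by gcongr
      _ = s 0 * exp (∑ j ∈ Finset.range (n + 1), Q j) * r ^ (n + 1) := by
        rw [Finset.sum_range_succ, exp_add, pow_succ]; ring

theorem le_mul_exp_mul_pow_of_flow_of_jump {x : ℕ → ℝ → ℝ} {a b : ℕ → ℝ} {Φ : ℕ → ℝ → ℝ}
    {r C : ℝ} (hr : 0 ≤ r) (hx0 : 0 ≤ x 0 (a 0)) (hab : ∀ n, a n ≤ b n)
    (hflow : ∀ n, ∀ t ∈ Icc (a n) (b n), x n t ≤ x n (a n) * exp (Φ n t))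
    (hjump : ∀ n, x (n + 1) (a (n + 1)) ≤ r * x n (b n))
    (hC : ∀ n, ∀ t ∈ Icc (a n) (b n), ∑ j ∈ Finset.range n, Φ j (b j) + Φ n t ≤ C)
    (n : ℕ) (t : ℝ) (ht : t ∈ Icc (a n) (b n)) :
    x n t ≤ x 0 (a 0) * exp C * r ^ n := by
  have hstart := le_mul_exp_sum_mul_pow hr
    (fun n => hflow n (b n) (right_mem_Icc.2 (hab n))) hjump n
  calc x n t ≤ x 0 (a 0) * exp (∑ j ∈ Finset.range n, Φ j (b j)) * r ^ n * exp (Φ n t) :=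
        (hflow n t ht).trans (by gcongr)
    _ = x 0 (a 0) * exp (∑ j ∈ Finset.range n, Φ j (b j) + Φ n t) * r ^ n := by
        rw [exp_add]; ring
    _ ≤ x 0 (a 0) * exp C * r ^ n := by gcongr; exact hC n t ht

theorem tendsto_iSup_norm_of_le_geometric {α E : Type*} [SeminormedAddCommGroup E]
    {f : ℕ → α → E} {S : ℕ → Set α} {c r : ℝ} (hc : 0 ≤ c) (hr0 : 0 ≤ r) (hr1 : r < 1)
    (hf : ∀ n, ∀ t ∈ S n, ‖f n t‖ ≤ c * r ^ n) :
    Filter.Tendsto (fun n => ⨆ t ∈ S n, ‖f n t‖) Filter.atTop (nhds 0) := by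
  refine squeeze_zero (fun n => Real.iSup_nonneg fun t => Real.iSup_nonneg fun _ => norm_nonneg _)
    (fun n => Real.iSup_le (fun t => Real.iSup_le (hf n t) (by positivity)) (by positivity)) ?_
  simpa using (tendsto_pow_atTop_nhds_zero_of_lt_one hr0 hr1).const_mul c

theorem stmt12_general {N : ℕ} (B : Matrix (Fin N) (Fin N) ℝ)
    (hB : B.IsHermitian) (lmin : ℝ)
    (hmin_le : ∀ i, lmin ≤ hB.eigenvalues i)
    (a b : ℕ → ℝ) (hab : ∀ j, a j ≤ b j) (hba : ∀ j, b j < a (j + 1))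
    (μ : ℕ → ℝ) (hμdef : ∀ j, μ j = a (j + 1) - b j)
    (μstar : ℝ) (hμstar : 0 < μstar) (hμle : ∀ j, μ j ≤ μstar)
    (γ : ℝ → ℝ) (hγc : Continuous γ) (hγ0 : ∀ t, 0 ≤ γ t)
    (δ : ℝ)
    (L : ℝ) (hL : 0 < L)
    (γd : ℕ → ℝ)
    (hγd : ∀ j i, δ ≤ μ j * γd j * hB.eigenvalues i ∧ μ j * γd j * hB.eigenvalues i < 1)
    (ε g : ℕ → ℝ → EuclideanSpace ℝ (Fin N))
    (hode : ∀ j, ∀ t ∈ Set.Icc (a j) (b j),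
      HasDerivAt (ε j)
        (-(γ t) • (Matrix.toEuclideanCLM (𝕜 := ℝ) (n := Fin N) B (ε j t)) + g j t) t)
    (hg : ∀ j, ∀ t ∈ Set.Icc (a j) (b j), ‖g j t‖ ≤ L * ‖ε j t‖)
    (h : ℕ → EuclideanSpace ℝ (Fin N))
    (hjump : ∀ j, ε (j + 1) (a (j + 1)) =
      Matrix.toEuclideanCLM (𝕜 := ℝ) (n := Fin N) (1 - (μ j * γd j) • B) (ε j (b j))
        + μ j • h j)
    (hh : ∀ j, ‖h j‖ ≤ L * ‖ε j (b j)‖)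
    (M : ℝ) (hM : M = max (1 - δ) (Real.exp (-lmin)))
    (hM1 : M + μstar * L < 1)
    (C : ℝ)
    (hC : ∀ n, ∀ t ∈ Set.Icc (a n) (b n),
      (∑ j ∈ Finset.range n,
          (L * M⁻¹ * (b j - a j) + Real.log M * ∫ s in (a j)..(b j), γ s))
        + L * M⁻¹ * (t - a n) + Real.log M * ∫ s in (a n)..t, γ s ≤ C) :
    (∀ n, ∀ t ∈ Set.Icc (a n) (b n),
      ‖ε n t‖ ≤ ‖ε 0 (a 0)‖ * Real.exp C * (M + μstar * L) ^ n) ∧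
    Filter.Tendsto (fun n => ⨆ t ∈ Set.Icc (a n) (b n), ‖ε n t‖)
      Filter.atTop (nhds 0) := by
  have hM0 : 0 < M := hM ▸ (exp_pos _).trans_le (le_max_right _ _)
  have hMle1 : M ≤ 1 := by nlinarith [mul_pos hμstar hL]
  have hr : 0 ≤ M + μstar * L := add_nonneg hM0.le (mul_pos hμstar hL).le
  have hflow : ∀ n, ∀ t ∈ Icc (a n) (b n), ‖ε n t‖ ≤
      ‖ε n (a n)‖ * exp (L * M⁻¹ * (t - a n) + log M * ∫ s in (a n)..t, γ s) := fun n t ht =>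
    (norm_le_of_hasDerivAt_neg_smul_add (hB.mul_norm_sq_le_inner_toEuclideanCLM_s12 hmin_le)
      hγc hγ0 (hode n) (hg n) ht).trans <| by
        gcongr
        exact mul_sub_mul_le_mul_inv_mul_add_log_mul hL.le (hM ▸ le_max_right _ _) hMle1
          (sub_nonneg.2 ht.1) (intervalIntegral.integral_nonneg ht.1 fun s _ => hγ0 s)
  have hjump_le : ∀ n, ‖ε (n + 1) (a (n + 1))‖ ≤ (M + μstar * L) * ‖ε n (b n)‖ := fun n => by
    have hcontr := hB.norm_toEuclideanCLM_one_sub_smul_le hM0.le (c := μ n * γd n)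
      (fun i => abs_le.2 ⟨by linarith [(hγd n i).2],
        by linarith [(hγd n i).1, hM ▸ le_max_left (1 - δ) (exp (-lmin))]⟩) (ε n (b n))
    rw [hjump n]
    exact norm_add_smul_le_of_le hcontr (by linarith [hμdef n, hba n]) (hμle n) (hh n)
  have hbound := le_mul_exp_mul_pow_of_flow_of_jump hr (norm_nonneg _) hab hflow hjump_le
    fun n t ht => (add_assoc _ _ _).symm.trans_le (hC n t ht)
  exact ⟨hbound, tendsto_iSup_norm_of_le_geometric (by positivity) hr hM1 hbound⟩

/-- hybrid setup (see statement 11) with `λmin > 0`,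
`M = max (1-δ) e^{-λmin} ∈ (0,1)`, `M + μ* 𝓛 < 1`, and a constant `C` bounding
`∑_{j<n} (𝓛 M⁻¹ (b_j - a_j) + (ln M) ∫_{a_j}^{b_j} γ) + 𝓛 M⁻¹ (t - a_n)
 + (ln M) ∫_{a_n}^t γ ≤ C` for all `n` and `t ∈ [a_n, b_n]`.  Then
`‖ε_n(t)‖ ≤ ‖ε_0(a_0)‖ e^C (M + μ* 𝓛)^n` for all such `n, t`, and consequently
`sup_{t ∈ [a_n, b_n]} ‖ε_n(t)‖ → 0` as `n → ∞`. -/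
theorem stmt12 {N : ℕ} (hN : 0 < N) (B : Matrix (Fin N) (Fin N) ℝ)
    (hB : B.IsHermitian) (lmin : ℝ)
    (hmin_le : ∀ i, lmin ≤ hB.eigenvalues i)
    (hmin_mem : ∃ i, hB.eigenvalues i = lmin)
    (hlmin_pos : 0 < lmin)
    (a b : ℕ → ℝ) (hab : ∀ j, a j ≤ b j) (hba : ∀ j, b j < a (j + 1))
    (μ : ℕ → ℝ) (hμdef : ∀ j, μ j = a (j + 1) - b j)
    (μstar : ℝ) (hμstar : 0 < μstar) (hμle : ∀ j, μ j ≤ μstar)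
    (γ : ℝ → ℝ) (hγc : Continuous γ) (hγ0 : ∀ t, 0 ≤ γ t)
    (δ : ℝ) (hδ0 : 0 < δ) (hδ1 : δ < 1)
    (L : ℝ) (hL : 0 < L)
    (γd : ℕ → ℝ)
    (hγd : ∀ j i, δ ≤ μ j * γd j * hB.eigenvalues i ∧ μ j * γd j * hB.eigenvalues i < 1)
    (ε g : ℕ → ℝ → EuclideanSpace ℝ (Fin N))
    (hode : ∀ j, ∀ t ∈ Set.Icc (a j) (b j),
      HasDerivAt (ε j)
        (-(γ t) • (Matrix.toEuclideanCLM (𝕜 := ℝ) (n := Fin N) B (ε j t)) + g j t) t)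
    (hg : ∀ j, ∀ t ∈ Set.Icc (a j) (b j), ‖g j t‖ ≤ L * ‖ε j t‖)
    (h : ℕ → EuclideanSpace ℝ (Fin N))
    (hjump : ∀ j, ε (j + 1) (a (j + 1)) =
      Matrix.toEuclideanCLM (𝕜 := ℝ) (n := Fin N) (1 - (μ j * γd j) • B) (ε j (b j))
        + μ j • h j)
    (hh : ∀ j, ‖h j‖ ≤ L * ‖ε j (b j)‖)
    (M : ℝ) (hM : M = max (1 - δ) (Real.exp (-lmin)))
    (hM1 : M + μstar * L < 1)
    (C : ℝ)
    (hC : ∀ n, ∀ t ∈ Set.Icc (a n) (b n),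
      (∑ j ∈ Finset.range n,
          (L * M⁻¹ * (b j - a j) + Real.log M * ∫ s in (a j)..(b j), γ s))
        + L * M⁻¹ * (t - a n) + Real.log M * ∫ s in (a n)..t, γ s ≤ C) :
    (∀ n, ∀ t ∈ Set.Icc (a n) (b n),
      ‖ε n t‖ ≤ ‖ε 0 (a 0)‖ * Real.exp C * (M + μstar * L) ^ n) ∧
    Filter.Tendsto (fun n => ⨆ t ∈ Set.Icc (a n) (b n), ‖ε n t‖)
      Filter.atTop (nhds 0) :=
  stmt12_general B hB lmin hmin_le a b hab hba μ hμdef μstar hμstar hμle γ hγc hγ0 δ L hL γd hγd ε g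
    hode hg h hjump hh M hM hM1 C hC
end

section
/- Consider the hybrid setup, with λ_min > 0 and M := max(1−δ, e^{−λ_min}) ∈ (0,1). Assume lim_{n→∞} exp(𝓛·M^{−1}·∑_{j=0}^{n}(b_j−a_j))·(M + μ*·𝓛)^n = 0. Then sup_{t ∈ [a_n,b_n]} ‖ε_n(t)‖ → 0 as n → ∞. -/
/-! On each flow interval `B` is positive semidefinite, so `‖ε_n‖²` grows at rate at most `2𝓛`
and Grönwall gives `‖ε_n(t)‖ ≤ e^{𝓛 (b_n - a_n)} ‖ε_n(a_n)‖`. At a jump, `I - μ_j γ_j B` has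
spectrum in `(0, 1 - δ]`, so the norm is multiplied by at most `1 - δ + μ* 𝓛 ≤ M + μ* 𝓛`.
Chaining, `sup_{[a_n, b_n]} ‖ε_n‖ ≤ e^{𝓛 ∑_{j ≤ n} (b_j - a_j)} (M + μ* 𝓛)^n ‖ε_0(a_0)‖`, and since
`M ≤ 1` this is dominated by the null sequence of the hypothesis. -/

open Set Filter
open scoped RealInnerProductSpace

namespace Matrix.IsHermitian

variable {n : Type*} [Fintype n] [DecidableEq n] {A : Matrix n n ℝ} (hA : A.IsHermitian)
include hA

lemma toEuclideanCLM_eigenvectorBasis_s15 (j : n) :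
    toEuclideanCLM (𝕜 := ℝ) A (hA.eigenvectorBasis j) = hA.eigenvalues j • hA.eigenvectorBasis j :=
  WithLp.ofLp_injective _ <| by simp [hA.mulVec_eigenvectorBasis j]

lemma eigenvectorBasis_repr_toEuclideanCLM (x : EuclideanSpace ℝ n) (i : n) :
    hA.eigenvectorBasis.repr (toEuclideanCLM (𝕜 := ℝ) A x) i
      = hA.eigenvalues i * hA.eigenvectorBasis.repr x i := by
  conv_lhs => rw [← hA.eigenvectorBasis.sum_repr x]
  simp [map_sum, hA.toEuclideanCLM_eigenvectorBasis_s15, Pi.single_apply, mul_comm]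

lemma norm_toEuclideanCLM_one_sub_smul_le_s15 {c d : ℝ} (hd : 0 ≤ d)
    (hev : ∀ i, |1 - c * hA.eigenvalues i| ≤ d) (x : EuclideanSpace ℝ n) :
    ‖toEuclideanCLM (𝕜 := ℝ) (1 - c • A) x‖ ≤ d * ‖x‖ := by
  set e := hA.eigenvectorBasis
  have hcoord : ∀ i, e.repr (toEuclideanCLM (𝕜 := ℝ) (1 - c • A) x) i
      = (1 - c * hA.eigenvalues i) * e.repr x i := fun i => by
    simp [e, hA.eigenvectorBasis_repr_toEuclideanCLM]
    ring
  refine (sq_le_sq₀ (norm_nonneg _) (by positivity)).mp ?_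
  rw [← e.repr.norm_map, ← e.repr.norm_map x, EuclideanSpace.norm_sq_eq,
    mul_pow, EuclideanSpace.norm_sq_eq, Finset.mul_sum]
  refine Finset.sum_le_sum fun i _ => ?_
  rw [hcoord, norm_mul, mul_pow, Real.norm_eq_abs]
  gcongr
  exact hev i

lemma norm_toEuclideanCLM_one_sub_smul_add_smul_le {c δ μ μstar L : ℝ} (hδ : δ ≤ 1)
    (hev : ∀ i, δ ≤ c * hA.eigenvalues i ∧ c * hA.eigenvalues i ≤ 1) (hμ : 0 ≤ μ)
    (hμle : μ ≤ μstar) {x y : EuclideanSpace ℝ n} (hy : ‖y‖ ≤ L * ‖x‖) :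
    ‖toEuclideanCLM (𝕜 := ℝ) (1 - c • A) x + μ • y‖ ≤ (1 - δ + μstar * L) * ‖x‖ := by
  have hdamp := hA.norm_toEuclideanCLM_one_sub_smul_le_s15 (c := c) (sub_nonneg.mpr hδ)
    (fun i => abs_le.mpr ⟨by linarith [(hev i).2], by linarith [(hev i).1]⟩) x
  have hpert : ‖μ • y‖ ≤ μstar * (L * ‖x‖) := by
    rw [norm_smul, Real.norm_of_nonneg hμ]
    exact mul_le_mul hμle hy (norm_nonneg _) (hμ.trans hμle)
  calc _ ≤ _ := norm_add_le _ _
    _ ≤ (1 - δ) * ‖x‖ + μstar * (L * ‖x‖) := add_le_add hdamp hpert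
    _ = (1 - δ + μstar * L) * ‖x‖ := by ring

end Matrix.IsHermitian

lemma Matrix.PosSemidef.inner_toEuclideanCLM_self_nonneg {n : Type*} [Fintype n] [DecidableEq n]
    {A : Matrix n n ℝ} (hA : A.PosSemidef) (x : EuclideanSpace ℝ n) :
    0 ≤ ⟪x, Matrix.toEuclideanCLM (𝕜 := ℝ) A x⟫ := by
  simpa [Matrix.inner_toEuclideanCLM] using hA.re_dotProduct_nonneg x

lemma norm_le_exp_mul_of_hasDerivAt_of_inner_nonneg {E : Type*} [NormedAddCommGroup E]
    [InnerProductSpace ℝ E] {T : E → E} (hT : ∀ x, 0 ≤ ⟪x, T x⟫) {γ : ℝ → ℝ}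
    (hγ : ∀ t, 0 ≤ γ t) {L a b : ℝ} {u g : ℝ → E}
    (hu : ∀ t ∈ Icc a b, HasDerivAt u (-(γ t) • T (u t) + g t) t)
    (hg : ∀ t ∈ Icc a b, ‖g t‖ ≤ L * ‖u t‖) :
    ∀ t ∈ Icc a b, ‖u t‖ ≤ Real.exp (L * (t - a)) * ‖u a‖ := by
  have hderiv : ∀ t ∈ Icc a b,
      HasDerivAt (‖u ·‖ ^ 2) (2 * ⟪u t, -(γ t) • T (u t) + g t⟫) t :=
    fun t ht => (hu t ht).norm_sq
  have hrate : ∀ t ∈ Icc a b, 2 * ⟪u t, -(γ t) • T (u t) + g t⟫ ≤ 2 * L * ‖u t‖ ^ 2 := by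
    intro t ht
    have hdiss : 0 ≤ γ t * ⟪u t, T (u t)⟫ := mul_nonneg (hγ t) (hT _)
    have hpert : ⟪u t, g t⟫ ≤ L * ‖u t‖ ^ 2 := calc
      ⟪u t, g t⟫ ≤ ‖u t‖ * ‖g t‖ := real_inner_le_norm _ _
      _ ≤ ‖u t‖ * (L * ‖u t‖) := by gcongr; exact hg t ht
      _ = L * ‖u t‖ ^ 2 := by ring
    rw [inner_add_right, real_inner_smul_right]
    linarith
  have hsq := le_gronwallBound_of_liminf_deriv_right_le (ε := 0)
    (fun t ht => (hderiv t ht).continuousAt.continuousWithinAt)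
    (fun t ht _ hr => (hderiv t (Ico_subset_Icc_self ht)).hasDerivWithinAt.liminf_right_slope_le hr)
    le_rfl (fun t ht => by simpa using hrate t (Ico_subset_Icc_self ht))
  intro t ht
  refine (sq_le_sq₀ (norm_nonneg _) (by positivity)).mp ?_
  calc ‖u t‖ ^ 2 ≤ ‖u a‖ ^ 2 * Real.exp (2 * L * (t - a)) := by
        simpa [gronwallBound_ε0] using hsq t ht
    _ = (Real.exp (L * (t - a)) * ‖u a‖) ^ 2 := by
        rw [mul_pow, ← Real.exp_nat_mul]; ring_nf

lemma norm_le_prod_mul_pow_mul_of_flow_of_jump {E : Type*} [SeminormedAddCommGroup E]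
    {u : ℕ → ℝ → E} {a b K : ℕ → ℝ} {C : ℝ} (hK : ∀ n, 0 ≤ K n) (hC : 0 ≤ C)
    (hab : ∀ n, a n ≤ b n)
    (hflow : ∀ n, ∀ t ∈ Icc (a n) (b n), ‖u n t‖ ≤ K n * ‖u n (a n)‖)
    (hjump : ∀ n, ‖u (n + 1) (a (n + 1))‖ ≤ C * ‖u n (b n)‖) (n : ℕ) :
    ∀ t ∈ Icc (a n) (b n), ‖u n t‖ ≤ (∏ j ∈ Finset.range (n + 1), K j) * C ^ n * ‖u 0 (a 0)‖ := by
  induction n with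
  | zero => simpa using hflow 0
  | succ n ih =>
    intro t ht
    calc ‖u (n + 1) t‖ ≤ K (n + 1) * ‖u (n + 1) (a (n + 1))‖ := hflow (n + 1) t ht
      _ ≤ K (n + 1) * (C * ((∏ j ∈ Finset.range (n + 1), K j) * C ^ n * ‖u 0 (a 0)‖)) := by
          refine mul_le_mul_of_nonneg_left ((hjump n).trans ?_) (hK _)
          exact mul_le_mul_of_nonneg_left (ih (b n) ⟨hab n, le_rfl⟩) hC
      _ = _ := by rw [Finset.prod_range_succ _ (n + 1), pow_succ]; ring

theorem stmt15_general {N : ℕ} (B : Matrix (Fin N) (Fin N) ℝ)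
    (hB : B.IsHermitian) (lmin : ℝ)
    (hmin_le : ∀ i, lmin ≤ hB.eigenvalues i)
    (hlmin_pos : 0 < lmin)
    (a b : ℕ → ℝ) (hab : ∀ j, a j ≤ b j) (hba : ∀ j, b j < a (j + 1))
    (μ : ℕ → ℝ) (hμdef : ∀ j, μ j = a (j + 1) - b j)
    (μstar : ℝ) (hμstar : 0 < μstar) (hμle : ∀ j, μ j ≤ μstar)
    (γ : ℝ → ℝ) (hγ0 : ∀ t, 0 ≤ γ t)
    (δ : ℝ) (hδ0 : 0 < δ) (hδ1 : δ < 1)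
    (L : ℝ) (hL : 0 < L)
    (γd : ℕ → ℝ)
    (hγd : ∀ j i, δ ≤ μ j * γd j * hB.eigenvalues i ∧ μ j * γd j * hB.eigenvalues i < 1)
    (ε g : ℕ → ℝ → EuclideanSpace ℝ (Fin N))
    (hode : ∀ j, ∀ t ∈ Set.Icc (a j) (b j),
      HasDerivAt (ε j)
        (-(γ t) • (Matrix.toEuclideanCLM (𝕜 := ℝ) (n := Fin N) B (ε j t)) + g j t) t)
    (hg : ∀ j, ∀ t ∈ Set.Icc (a j) (b j), ‖g j t‖ ≤ L * ‖ε j t‖)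
    (h : ℕ → EuclideanSpace ℝ (Fin N))
    (hjump : ∀ j, ε (j + 1) (a (j + 1)) =
      Matrix.toEuclideanCLM (𝕜 := ℝ) (n := Fin N) (1 - (μ j * γd j) • B) (ε j (b j))
        + μ j • h j)
    (hh : ∀ j, ‖h j‖ ≤ L * ‖ε j (b j)‖)
    (M : ℝ) (hM : M = max (1 - δ) (Real.exp (-lmin)))
    (hlim : Filter.Tendsto
      (fun n => Real.exp (L * M⁻¹ * ∑ j ∈ Finset.range (n + 1), (b j - a j))
        * (M + μstar * L) ^ n) Filter.atTop (nhds 0)) :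
    Filter.Tendsto (fun n => ⨆ t ∈ Set.Icc (a n) (b n), ‖ε n t‖)
      Filter.atTop (nhds 0) := by
  have hM₀ : 0 < M := hM ▸ (Real.exp_pos _).trans_le (le_max_right _ _)
  have hM₁ : M ≤ 1 := hM ▸ max_le (by linarith) (Real.exp_le_one_iff.mpr (by linarith))
  have hpsd : B.PosSemidef :=
    hB.posSemidef_iff_eigenvalues_nonneg.mpr fun i => hlmin_pos.le.trans (hmin_le i)
  have hflow : ∀ n, ∀ t ∈ Icc (a n) (b n),
      ‖ε n t‖ ≤ Real.exp (L * (b n - a n)) * ‖ε n (a n)‖ := fun n t ht =>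
    (norm_le_exp_mul_of_hasDerivAt_of_inner_nonneg
      hpsd.inner_toEuclideanCLM_self_nonneg
      hγ0 (hode n) (hg n) t ht).trans (by gcongr; exact ht.2)
  have hjump_le : ∀ n, ‖ε (n + 1) (a (n + 1))‖ ≤ (M + μstar * L) * ‖ε n (b n)‖ := fun n => by
    have hμ : 0 < μ n := by linarith [hμdef n, hba n]
    rw [hjump n]
    refine (hB.norm_toEuclideanCLM_one_sub_smul_add_smul_le hδ1.le
      (fun i => ⟨(hγd n i).1, (hγd n i).2.le⟩) hμ.le (hμle n) (hh n)).trans ?_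
    gcongr
    exact hM ▸ le_max_left _ _
  have hbound : ∀ n, (⨆ t ∈ Icc (a n) (b n), ‖ε n t‖) ≤ Real.exp (L * M⁻¹ *
      ∑ j ∈ Finset.range (n + 1), (b j - a j)) * (M + μstar * L) ^ n * ‖ε 0 (a 0)‖ := by
    intro n
    have hchain := norm_le_prod_mul_pow_mul_of_flow_of_jump
      (K := fun n => Real.exp (L * (b n - a n))) (fun _ => (Real.exp_pos _).le) (by positivity)
      hab hflow hjump_le n
    have hS : 0 ≤ ∑ j ∈ Finset.range (n + 1), (b j - a j) :=
      Finset.sum_nonneg fun j _ => sub_nonneg.mpr (hab j)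
    have hM_inv : 1 ≤ M⁻¹ := (one_le_inv₀ hM₀).mpr hM₁
    refine Real.iSup_le (fun t => Real.iSup_le (fun ht => (hchain t ht).trans ?_) (by positivity))
      (by positivity)
    rw [← Real.exp_sum, ← Finset.mul_sum]
    gcongr
    nlinarith
  exact squeeze_zero (fun n => Real.iSup_nonneg fun t => Real.iSup_nonneg fun _ => norm_nonneg _)
    hbound (by simpa using hlim.mul_const ‖ε 0 (a 0)‖)

/-- hybrid setup (see statement 11) with `λmin > 0` and
`M = max (1-δ) e^{-λmin} ∈ (0,1)`.  If
`exp(𝓛 M⁻¹ ∑_{j=0}^{n} (b_j - a_j)) (M + μ* 𝓛)^n → 0` as `n → ∞`, then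
`sup_{t ∈ [a_n, b_n]} ‖ε_n(t)‖ → 0` as `n → ∞`. -/
theorem stmt15 {N : ℕ} (hN : 0 < N) (B : Matrix (Fin N) (Fin N) ℝ)
    (hB : B.IsHermitian) (lmin : ℝ)
    (hmin_le : ∀ i, lmin ≤ hB.eigenvalues i)
    (hmin_mem : ∃ i, hB.eigenvalues i = lmin)
    (hlmin_pos : 0 < lmin)
    (a b : ℕ → ℝ) (hab : ∀ j, a j ≤ b j) (hba : ∀ j, b j < a (j + 1))
    (μ : ℕ → ℝ) (hμdef : ∀ j, μ j = a (j + 1) - b j)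
    (μstar : ℝ) (hμstar : 0 < μstar) (hμle : ∀ j, μ j ≤ μstar)
    (γ : ℝ → ℝ) (hγc : Continuous γ) (hγ0 : ∀ t, 0 ≤ γ t)
    (δ : ℝ) (hδ0 : 0 < δ) (hδ1 : δ < 1)
    (L : ℝ) (hL : 0 < L)
    (γd : ℕ → ℝ)
    (hγd : ∀ j i, δ ≤ μ j * γd j * hB.eigenvalues i ∧ μ j * γd j * hB.eigenvalues i < 1)
    (ε g : ℕ → ℝ → EuclideanSpace ℝ (Fin N))
    (hode : ∀ j, ∀ t ∈ Set.Icc (a j) (b j),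
      HasDerivAt (ε j)
        (-(γ t) • (Matrix.toEuclideanCLM (𝕜 := ℝ) (n := Fin N) B (ε j t)) + g j t) t)
    (hg : ∀ j, ∀ t ∈ Set.Icc (a j) (b j), ‖g j t‖ ≤ L * ‖ε j t‖)
    (h : ℕ → EuclideanSpace ℝ (Fin N))
    (hjump : ∀ j, ε (j + 1) (a (j + 1)) =
      Matrix.toEuclideanCLM (𝕜 := ℝ) (n := Fin N) (1 - (μ j * γd j) • B) (ε j (b j))
        + μ j • h j)
    (hh : ∀ j, ‖h j‖ ≤ L * ‖ε j (b j)‖)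
    (M : ℝ) (hM : M = max (1 - δ) (Real.exp (-lmin)))
    (hlim : Filter.Tendsto
      (fun n => Real.exp (L * M⁻¹ * ∑ j ∈ Finset.range (n + 1), (b j - a j))
        * (M + μstar * L) ^ n) Filter.atTop (nhds 0)) :
    Filter.Tendsto (fun n => ⨆ t ∈ Set.Icc (a n) (b n), ‖ε n t‖)
      Filter.atTop (nhds 0) :=
  stmt15_general B hB lmin hmin_le hlmin_pos a b hab hba μ hμdef μstar hμstar hμle γ hγ0 δ hδ0 hδ1 L
    hL γd hγd ε g hode hg h hjump hh M hM hlim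
end
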